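/- If n ≥ 2k-t-ε, then the anticode A_q(t,ε,k,n) has Hamming diameter exactly 2k-2t-ε. -/

import Mathlib

/-!
Two words of the anticode can differ only outside the common prefix of `t` ones, i.e. on the
`ε` free nonzero coordinates or on the tail support of either word, which has `k - t - ε`
elements; this gives `ε + 2 (k - t - ε)`. The bound is attained by `1^k 0^(n-k)` and a word that
takes the third symbol `2` on the `ε` free coordinates and moves its tail support past position
`k`, which `n ≥ 2k - t - ε` leaves room for.
-/

open Finset

/-- The anticode `A_q(t,ε,k,n)`: words with 1's in the first `t` coordinates,
arbitrary nonzero symbols in the next `ε` coordinates, and exactly `k-t-ε`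
nonzero entries in the remaining `n-t-ε` coordinates. -/
def anticodeA (q n t ε k : ℕ) : Finset (Fin n → Fin q) :=
  (univ : Finset (Fin n → Fin q)).filter (fun x =>
    (∀ i : Fin n, (i : ℕ) < t → (x i : ℕ) = 1) ∧
    (∀ i : Fin n, t ≤ (i : ℕ) → (i : ℕ) < t + ε → (x i : ℕ) ≠ 0) ∧
    (univ.filter (fun i : Fin n => t + ε ≤ (i : ℕ) ∧ (x i : ℕ) ≠ 0)).card = k - t - ε)

theorem Fin.card_filter_le_of_imp {n a b : ℕ} {p : Fin n → Prop} [DecidablePred p]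
    (h : ∀ i, p i → a ≤ (i : ℕ) ∧ (i : ℕ) < b) : #{i | p i} ≤ b - a := by
  rw [← Nat.card_Ico]
  exact card_le_card_of_injOn Fin.val (fun i hi => mem_Ico.2 (h i (mem_filter.1 hi).2))
    Fin.val_injective.injOn

theorem Fin.card_filter_eq_of_iff {n a b : ℕ} {p : Fin n → Prop} [DecidablePred p] (hb : b ≤ n)
    (h : ∀ i, p i ↔ a ≤ (i : ℕ) ∧ (i : ℕ) < b) : #{i | p i} = b - a := by
  rw [← Nat.card_Ico]
  refine card_nbij (·.val) (fun i hi => mem_Ico.2 ((h i).1 (mem_filter.1 hi).2))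
    Fin.val_injective.injOn fun m hm => ?_
  have hm := mem_Ico.1 hm
  exact ⟨⟨m, by omega⟩, mem_filter.2 ⟨mem_univ _, (h _).2 hm⟩, rfl⟩

theorem hammingDist_le_card_of_forall_notMem {ι : Type*} [Fintype ι] {β : ι → Type*}
    [∀ i, DecidableEq (β i)] {x y : ∀ i, β i} {s : Finset ι} (h : ∀ i ∉ s, x i = y i) :
    hammingDist x y ≤ #s :=
  card_le_card fun i hi => by_contra fun hs => (mem_filter.1 hi).2 (h i hs)

section anticodeA

variable {q n t ε k : ℕ}

theorem mem_anticodeA {x : Fin n → Fin q} :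
    x ∈ anticodeA q n t ε k ↔
      (∀ i : Fin n, (i : ℕ) < t → (x i : ℕ) = 1) ∧
      (∀ i : Fin n, t ≤ (i : ℕ) → (i : ℕ) < t + ε → (x i : ℕ) ≠ 0) ∧
      #{i : Fin n | t + ε ≤ (i : ℕ) ∧ (x i : ℕ) ≠ 0} = k - t - ε := by
  simp only [anticodeA, mem_filter, mem_univ, true_and]

theorem hammingDist_le_of_mem_anticodeA (hε : t + ε ≤ k) {x y : Fin n → Fin q}
    (hx : x ∈ anticodeA q n t ε k) (hy : y ∈ anticodeA q n t ε k) :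
    hammingDist x y ≤ 2 * k - 2 * t - ε := by
  obtain ⟨hx₁, -, hxsupp⟩ := mem_anticodeA.1 hx
  obtain ⟨hy₁, -, hysupp⟩ := mem_anticodeA.1 hy
  set middle : Finset (Fin n) := {i | t ≤ (i : ℕ) ∧ (i : ℕ) < t + ε}
  set suppX : Finset (Fin n) := {i | t + ε ≤ (i : ℕ) ∧ (x i : ℕ) ≠ 0}
  set suppY : Finset (Fin n) := {i | t + ε ≤ (i : ℕ) ∧ (y i : ℕ) ≠ 0}
  have hagree : ∀ i ∉ middle ∪ suppX ∪ suppY, x i = y i := by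
    intro i hi
    simp only [middle, suppX, suppY, mem_union, mem_filter, mem_univ, true_and, not_or,
      not_and, not_not] at hi
    by_cases hit : (i : ℕ) < t
    · exact Fin.ext ((hx₁ i hit).trans (hy₁ i hit).symm)
    · exact Fin.ext (by omega)
  have hmiddle : #middle ≤ ε := (Fin.card_filter_le_of_imp fun _ hi => hi).trans (by omega)
  calc hammingDist x y ≤ #(middle ∪ suppX ∪ suppY) := hammingDist_le_card_of_forall_notMem hagree
    _ ≤ #middle + #suppX + #suppY :=
        (card_union_le _ _).trans (Nat.add_le_add_right (card_union_le _ _) _)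
    _ ≤ 2 * k - 2 * t - ε := by omega

def leadingOnes (hq : 1 < q) (k : ℕ) : Fin n → Fin q :=
  fun i => if (i : ℕ) < k then ⟨1, hq⟩ else ⟨0, by omega⟩

def opposedWord (hq : 2 < q) (t ε k : ℕ) : Fin n → Fin q :=
  fun i =>
    if (i : ℕ) < t then ⟨1, by omega⟩
    else if (i : ℕ) < t + ε then ⟨2, hq⟩
    else if k ≤ (i : ℕ) ∧ (i : ℕ) < 2 * k - t - ε then ⟨1, by omega⟩
    else ⟨0, by omega⟩

theorem leadingOnes_mem_anticodeA (hq : 1 < q) (hε : t + ε ≤ k) (hkn : k ≤ n) :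
    leadingOnes (n := n) hq k ∈ anticodeA q n t ε k := by
  refine mem_anticodeA.2 ⟨fun i hi => ?_, fun i _ hi => ?_,
    (Fin.card_filter_eq_of_iff (a := t + ε) hkn fun i => ?_).trans (by omega)⟩ <;>
  simp only [leadingOnes, apply_ite Fin.val] <;> split_ifs <;> omega

theorem opposedWord_mem_anticodeA (hq : 2 < q) (hε : t + ε ≤ k) (hn : 2 * k - t - ε ≤ n) :
    opposedWord (n := n) hq t ε k ∈ anticodeA q n t ε k := by
  refine mem_anticodeA.2 ⟨fun i hi => ?_, fun i _ hi => ?_,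
    (Fin.card_filter_eq_of_iff (a := k) hn fun i => ?_).trans (by omega)⟩ <;>
  simp only [opposedWord, apply_ite Fin.val] <;> split_ifs <;> omega

theorem hammingDist_leadingOnes_opposedWord (hq : 2 < q) (hε : t + ε ≤ k)
    (hn : 2 * k - t - ε ≤ n) :
    hammingDist (leadingOnes (n := n) (by omega) k) (opposedWord (n := n) hq t ε k) =
      2 * k - 2 * t - ε := by
  rw [hammingDist, Fin.card_filter_eq_of_iff (a := t) hn fun i => ?_]
  · omega
  · simp only [leadingOnes, opposedWord, Fin.ne_iff_vne, apply_ite Fin.val]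
    split_ifs <;> omega

end anticodeA

theorem diameter_anticodeA_general (q n t ε k : ℕ) (hq : 3 ≤ q) (hε : t + ε ≤ k)
    (hn : 2 * k - t - ε ≤ n) :
    (∀ x ∈ anticodeA q n t ε k, ∀ y ∈ anticodeA q n t ε k,
      hammingDist x y ≤ 2 * k - 2 * t - ε) ∧
    (∃ x ∈ anticodeA q n t ε k, ∃ y ∈ anticodeA q n t ε k,
      hammingDist x y = 2 * k - 2 * t - ε) :=
  ⟨fun _ hx _ hy => hammingDist_le_of_mem_anticodeA hε hx hy,
    ⟨_, leadingOnes_mem_anticodeA _ hε (by omega), _, opposedWord_mem_anticodeA hq hε hn,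
      hammingDist_leadingOnes_opposedWord hq hε hn⟩⟩

/-- If `n ≥ 2k-t-ε`, then `A_q(t,ε,k,n)` has Hamming diameter exactly
`2k-2t-ε`. -/
theorem diameter_anticodeA (q n t ε k : ℕ) (hq : 3 ≤ q) (hε : t + ε ≤ k)
    (htk : t < k) (hkn : k ≤ n) (hn : 2 * k - t - ε ≤ n) :
    (∀ x ∈ anticodeA q n t ε k, ∀ y ∈ anticodeA q n t ε k,
      hammingDist x y ≤ 2 * k - 2 * t - ε) ∧
    (∃ x ∈ anticodeA q n t ε k, ∃ y ∈ anticodeA q n t ε k,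
      hammingDist x y = 2 * k - 2 * t - ε) :=
  diameter_anticodeA_general q n t ε k hq hε hn
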